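/- Let b : ℝ → ℝ be continuously differentiable, let γ, k ∈ ℝ, and let φ : ℝ → ℝ be twice continuously differentiable with φ(x) > 0 for all x ∈ ℝ, satisfying φ'' + b φ' + γ b φ = k φ on ℝ. Define y₁(x) := (φ'(x) + γφ(x)) · exp(∫₀ˣ b(s) ds). Then y₁ is twice continuously differentiable and satisfies y₁'' − b y₁' + (γ b − k) y₁ = 0 on ℝ. If moreover b and φ are 1-periodic and ∫₀¹ b(s) ds = 0, then y₁ is 1-periodic. -/

import Mathlib

/-!
Write `B x = ∫₀ˣ b` and `u = φ' + γφ`. The equation for `φ` says exactly that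
`u' + b u = γφ' + kφ`, so `y₁ = u e^B` has `y₁' = (γφ' + kφ) e^B`, which is again `C¹`.
Differentiating once more gives
`y₁'' - b y₁' + (γb - k) y₁ = γ (φ'' + bφ' + γbφ - kφ) e^B = 0`.
If `b` is `1`-periodic with zero mean, then `B` is `1`-periodic, and so is `y₁`, being built
from `φ`, `φ'` and `B`.
-/

open Real MeasureTheory

theorem HasDerivAt.mul_exp_comp {u B : ℝ → ℝ} {u' c x : ℝ} (hu : HasDerivAt u u' x)
    (hB : HasDerivAt B c x) :
    HasDerivAt (fun x => u x * Real.exp (B x)) ((u' + c * u x) * Real.exp (B x)) x :=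
  (hu.mul hB.exp).congr_deriv (by ring)

namespace Function.Periodic

variable {E : Type*} [NormedAddCommGroup E] [NormedSpace ℝ E] {f : ℝ → E} {T : ℝ}

protected theorem deriv (hf : Periodic f T) : Periodic (deriv f) T := fun x => by
  rw [← deriv_comp_add_const, hf.funext]

theorem intervalIntegral_of_integral_eq_zero (hf : Periodic f T)
    (h_int : ∀ t₁ t₂, IntervalIntegrable f volume t₁ t₂) (h_mean : ∫ x in 0..T, f x = 0)
    (a : ℝ) : Periodic (fun t => ∫ x in a..t, f x) T := fun t => by
  simp only [hf.intervalIntegral_add_eq_add a t h_int, hf.intervalIntegral_add_eq a 0, zero_add,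
    h_mean, add_zero]

end Function.Periodic

section ExpTwist

variable {b B φ : ℝ → ℝ} {γ k : ℝ}

theorem hasDerivAt_deriv_of_contDiff_two (hφ : ContDiff ℝ 2 φ) (x : ℝ) :
    HasDerivAt (deriv φ) (deriv (deriv φ) x) x :=
  ((hφ.deriv' (n := 1)).differentiable one_ne_zero x).hasDerivAt

variable (hB : ∀ x, HasDerivAt B (b x) x) (hφ : ContDiff ℝ 2 φ)
include hB hφ

theorem hasDerivAt_expTwist
    (heq : ∀ x, deriv (deriv φ) x + b x * deriv φ x + γ * b x * φ x = k * φ x) (x : ℝ) :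
    HasDerivAt (fun x => (deriv φ x + γ * φ x) * exp (B x))
      ((γ * deriv φ x + k * φ x) * exp (B x)) x := by
  have hφ' : HasDerivAt φ (deriv φ x) x := (hφ.differentiable two_ne_zero x).hasDerivAt
  refine (HasDerivAt.mul_exp_comp
    ((hasDerivAt_deriv_of_contDiff_two hφ x).add (hφ'.const_mul γ)) (hB x)).congr_deriv ?_
  simp only [Pi.add_apply]
  linear_combination exp (B x) * heq x

theorem hasDerivAt_deriv_expTwist (x : ℝ) :
    HasDerivAt (fun x => (γ * deriv φ x + k * φ x) * exp (B x))
      ((γ * deriv (deriv φ) x + k * deriv φ x + b x * (γ * deriv φ x + k * φ x))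
        * exp (B x)) x := by
  have hφ' : HasDerivAt φ (deriv φ x) x := (hφ.differentiable two_ne_zero x).hasDerivAt
  exact HasDerivAt.mul_exp_comp
    (((hasDerivAt_deriv_of_contDiff_two hφ x).const_mul γ).add (hφ'.const_mul k)) (hB x)

variable (heq : ∀ x, deriv (deriv φ) x + b x * deriv φ x + γ * b x * φ x = k * φ x)
include heq

theorem deriv_expTwist :
    deriv (fun x => (deriv φ x + γ * φ x) * exp (B x)) =
      fun x => (γ * deriv φ x + k * φ x) * exp (B x) :=
  funext fun x => (hasDerivAt_expTwist hB hφ heq x).deriv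

theorem contDiff_two_expTwist (hb : Continuous b) :
    ContDiff ℝ 2 (fun x => (deriv φ x + γ * φ x) * exp (B x)) := by
  have hB₁ : ContDiff ℝ 1 B := contDiff_one_iff_deriv.2
    ⟨fun x => (hB x).differentiableAt, by rwa [funext fun x => (hB x).deriv]⟩
  rw [show (2 : WithTop ℕ∞) = 1 + 1 from rfl, contDiff_succ_iff_deriv]
  refine ⟨fun x => (hasDerivAt_expTwist hB hφ heq x).differentiableAt, by simp, ?_⟩
  rw [deriv_expTwist hB hφ heq]
  exact ((contDiff_const.mul hφ.deriv').add (contDiff_const.mul (hφ.of_le one_le_two))).mul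
    hB₁.exp

theorem expTwist_ode (x : ℝ) :
    deriv (deriv fun x => (deriv φ x + γ * φ x) * exp (B x)) x
      - b x * deriv (fun x => (deriv φ x + γ * φ x) * exp (B x)) x
      + (γ * b x - k) * ((deriv φ x + γ * φ x) * exp (B x)) = 0 := by
  rw [deriv_expTwist hB hφ heq, (hasDerivAt_deriv_expTwist hB hφ x).deriv]
  linear_combination γ * exp (B x) * heq x

end ExpTwist

theorem stmt7_general (b : ℝ → ℝ) (γ k : ℝ) (φ : ℝ → ℝ)
    (hb : ContDiff ℝ 1 b) (hφ : ContDiff ℝ 2 φ)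
    (heq : ∀ x : ℝ,
      deriv (deriv φ) x + b x * deriv φ x + γ * b x * φ x = k * φ x)
    (y₁ : ℝ → ℝ)
    (hy₁ : y₁ = fun x => (deriv φ x + γ * φ x) * Real.exp (∫ s in (0:ℝ)..x, b s)) :
    (ContDiff ℝ 2 y₁ ∧
      ∀ x : ℝ, deriv (deriv y₁) x - b x * deriv y₁ x + (γ * b x - k) * y₁ x = 0) ∧
    (Function.Periodic b 1 → Function.Periodic φ 1 → (∫ s in (0:ℝ)..1, b s) = 0 →
      Function.Periodic y₁ 1) := by
  have hbc : Continuous b := hb.continuous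
  have hB (x : ℝ) : HasDerivAt (fun x => ∫ s in (0:ℝ)..x, b s) (b x) x :=
    (hbc.integral_hasStrictDerivAt 0 x).hasDerivAt
  subst hy₁
  refine ⟨⟨contDiff_two_expTwist hB hφ heq hbc, expTwist_ode hB hφ heq⟩,
    fun hbp hφp hmean x => ?_⟩
  have hBp := hbp.intervalIntegral_of_integral_eq_zero hbc.intervalIntegrable hmean 0
  simp only [hφp.deriv x, hφp x, hBp x]

/-- If `φ > 0` is a `C²` solution of `φ'' + bφ' + γbφ = kφ` on `ℝ` with `b` of
class `C¹`, then `y₁(x) := (φ'(x) + γφ(x)) exp(∫₀ˣ b)` is `C²` and satisfies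
`y₁'' - b y₁' + (γb - k) y₁ = 0` on `ℝ`; moreover if `b` and `φ` are `1`-periodic and `b` has
zero mean, then `y₁` is `1`-periodic. -/
theorem stmt7 (b : ℝ → ℝ) (γ k : ℝ) (φ : ℝ → ℝ)
    (hb : ContDiff ℝ 1 b) (hφ : ContDiff ℝ 2 φ) (hφpos : ∀ x, 0 < φ x)
    (heq : ∀ x : ℝ,
      deriv (deriv φ) x + b x * deriv φ x + γ * b x * φ x = k * φ x)
    (y₁ : ℝ → ℝ)
    (hy₁ : y₁ = fun x => (deriv φ x + γ * φ x) * Real.exp (∫ s in (0:ℝ)..x, b s)) :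
    (ContDiff ℝ 2 y₁ ∧
      ∀ x : ℝ, deriv (deriv y₁) x - b x * deriv y₁ x + (γ * b x - k) * y₁ x = 0) ∧
    (Function.Periodic b 1 → Function.Periodic φ 1 → (∫ s in (0:ℝ)..1, b s) = 0 →
      Function.Periodic y₁ 1) :=
  stmt7_general b γ k φ hb hφ heq y₁ hy₁
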